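/- arXiv:0808.2252 — 2 statements merged into one kernel-verified Lean document; each statement's English description precedes it below -/
import Mathlib

section
/- Let ρ_0 be a piecewise-continuous probability density on ℝ with mean zero and finite second moment, and let ρ_t = ρ_0 * G^t be the heat-equation solution with D = 1. Define the rescaled density ρ̃_t(x) := √t·ρ_t(x√t). Then there exists a constant C such that sup_{x∈ℝ} |ρ̃_t(x) − (4π)^{-1/2}·e^{-x²/4}| ≤ C/t for all sufficiently large t. -/
open MeasureTheory Real

/-- The Gaussian heat kernel with `D = 1`: `G^t(x) = (4πt)^{-1/2}·exp(-x²/(4t))`. -/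
noncomputable def heatKernel1 (t x : ℝ) : ℝ :=
  (4 * π * t) ^ (-(1 : ℝ) / 2) * Real.exp (-x ^ 2 / (4 * t))

/-!
Rescaling the heat kernel gives `√t·ρ_t(x√t) = (4π)^{-1/2} ∫ ρ₀(y) e^{-(x - y/√t)²/4} dy`.
Expand `φ(z) = e^{-z²/4}` to first order at `x`: since `ρ₀` has mass one and mean zero, the
Taylor polynomial integrates to exactly `φ(x)`, and since `φ'(z) = -(1/2)·z e^{-z²/4}` is
`1/2`-Lipschitz, the remainder at `x - y/√t` is at most `y²/(2t)`. Integrating against `|ρ₀|`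
bounds the error by the second moment over `2t`.
-/

open scoped NNReal

theorem abs_sub_sub_deriv_mul_le_of_lipschitzWith {f f' : ℝ → ℝ} {K : ℝ≥0}
    (hf : ∀ z, HasDerivAt f (f' z) z) (hf' : LipschitzWith K f') (x h : ℝ) :
    |f (x + h) - f x - f' x * h| ≤ K * h ^ 2 := by
  have hderiv : ∀ z ∈ Metric.closedBall x |h|,
      HasDerivWithinAt (fun z => f z - f' x * z) (f' z - f' x) (Metric.closedBall x |h|) z :=
    fun z _ => ((hf z).sub ((hasDerivAt_id z).const_mul (f' x))).hasDerivWithinAt.congr_deriv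
      (by simp)
  have hbound : ∀ z ∈ Metric.closedBall x |h|, ‖f' z - f' x‖ ≤ K * |h| := fun z hz =>
    (hf'.dist_le_mul z x).trans (by gcongr; exact hz)
  have := (convex_closedBall x |h|).norm_image_sub_le_of_norm_hasDerivWithin_le hderiv hbound
    (Metric.mem_closedBall_self (abs_nonneg h)) (y := x + h) (by simp)
  simp only [Real.norm_eq_abs, add_sub_cancel_left] at this
  calc |f (x + h) - f x - f' x * h| = |f (x + h) - f' x * (x + h) - (f x - f' x * x)| := by
        ring_nf
    _ ≤ K * |h| * |h| := this
    _ = K * h ^ 2 := by rw [mul_assoc, abs_mul_abs_self, sq]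

theorem hasDerivAt_exp_neg_sq_div_four (z : ℝ) :
    HasDerivAt (fun z => exp (-z ^ 2 / 4)) (-(z / 2) * exp (-z ^ 2 / 4)) z := by
  have := ((hasDerivAt_pow 2 z).const_mul (-1 / 4 : ℝ)).exp
  convert this using 1
  · ext w; ring_nf
  · push_cast; ring_nf

theorem lipschitzWith_deriv_exp_neg_sq_div_four :
    LipschitzWith (1 / 2) (fun z => -(z / 2) * exp (-z ^ 2 / 4)) := by
  refine LipschitzWith.of_dist_le_mul fun y z => ?_
  have hmul : ∀ w : ℝ, -(w / 2) * exp (-w ^ 2 / 4) = -(1 / 2) * mulExpNegMulSq (1 / 4) w :=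
    fun w => by rw [mulExpNegSq_apply]; ring_nf
  have := dist_mulExpNegMulSq_le_dist (ε := 1 / 4) (x := y) (y := z) (by norm_num)
  simp only [hmul, Real.dist_eq] at this ⊢
  rw [← mul_sub, abs_mul]
  push_cast
  norm_num
  linarith

theorem integrable_mul_of_integrable_sq_mul {ρ : ℝ → ℝ} (hρ : Integrable ρ)
    (hsecond : Integrable fun y => y ^ 2 * ρ y) : Integrable fun y => y * ρ y := by
  refine (hρ.norm.add hsecond.norm).mono' (aestronglyMeasurable_id.mul hρ.1)
    (Filter.Eventually.of_forall fun y => ?_)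
  simp only [Real.norm_eq_abs, abs_mul, Pi.add_apply, abs_pow, sq_abs]
  nlinarith [abs_nonneg (ρ y), sq_nonneg (|y| - 1), sq_abs y]

theorem sqrt_mul_heatKernel1 {t : ℝ} (ht : 0 < t) (x y : ℝ) :
    √t * heatKernel1 t (x * √t - y) = (4 * π) ^ (-(1 : ℝ) / 2) * exp (-(x - y / √t) ^ 2 / 4) := by
  have hsqrt : √t * t ^ (-(1 : ℝ) / 2) = 1 := by
    rw [Real.sqrt_eq_rpow, ← rpow_add ht]; norm_num
  have hexp : -(x * √t - y) ^ 2 / (4 * t) = -(x - y / √t) ^ 2 / 4 := by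
    field_simp
    rw [sq_sqrt ht.le, mul_comm]
  rw [heatKernel1, mul_rpow (by positivity) ht.le, hexp]
  linear_combination (4 * π) ^ (-(1 : ℝ) / 2) * exp (-(x - y / √t) ^ 2 / 4) * hsqrt

theorem abs_integral_mul_exp_neg_sq_div_four_sub_le {ρ : ℝ → ℝ} (hρ : Integrable ρ)
    (hmass : ∫ y, ρ y = 1) (hmean : ∫ y, y * ρ y = 0)
    (hsecond : Integrable fun y => y ^ 2 * ρ y) (s x : ℝ) :
    |(∫ y, ρ y * exp (-(x - y / s) ^ 2 / 4)) - exp (-x ^ 2 / 4)| ≤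
      (∫ y, |y ^ 2 * ρ y|) / (2 * s ^ 2) := by
  set d := -(x / 2) * exp (-x ^ 2 / 4)
  have hfirst : Integrable fun y => y * ρ y := integrable_mul_of_integrable_sq_mul hρ hsecond
  have hshift : Integrable fun y => ρ y * exp (-(x - y / s) ^ 2 / 4) := by
    refine hρ.mul_bdd (c := 1) (by fun_prop) (Filter.Eventually.of_forall fun y => ?_)
    rw [Real.norm_eq_abs, abs_exp, exp_le_one_iff]
    nlinarith [sq_nonneg (x - y / s)]
  have hlinear_eq : (fun y => ρ y * (exp (-x ^ 2 / 4) - d * (y / s))) =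
      fun y => exp (-x ^ 2 / 4) * ρ y - d / s * (y * ρ y) := by
    ext y; ring
  have hlinear : Integrable fun y => ρ y * (exp (-x ^ 2 / 4) - d * (y / s)) := by
    rw [hlinear_eq]
    exact (hρ.const_mul _).sub (hfirst.const_mul _)
  have hlinear_integral : ∫ y, ρ y * (exp (-x ^ 2 / 4) - d * (y / s)) = exp (-x ^ 2 / 4) := by
    rw [hlinear_eq, integral_sub (hρ.const_mul _) (hfirst.const_mul _), integral_const_mul,
      integral_const_mul, hmass, hmean]
    ring
  have htaylor : ∀ y, |ρ y * exp (-(x - y / s) ^ 2 / 4) - ρ y * (exp (-x ^ 2 / 4) - d * (y / s))|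
      ≤ 1 / (2 * s ^ 2) * |y ^ 2 * ρ y| := fun y => by
    have := abs_sub_sub_deriv_mul_le_of_lipschitzWith hasDerivAt_exp_neg_sq_div_four
      lipschitzWith_deriv_exp_neg_sq_div_four x (-(y / s))
    rw [← sub_eq_add_neg] at this
    calc _ = |ρ y| * |exp (-(x - y / s) ^ 2 / 4) - exp (-x ^ 2 / 4) - d * -(y / s)| := by
          rw [← abs_mul]; ring_nf
      _ ≤ |ρ y| * ((1 / 2 : ℝ≥0) * (-(y / s)) ^ 2) := by gcongr
      _ = 1 / (2 * s ^ 2) * |y ^ 2 * ρ y| := by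
          rw [abs_mul, abs_pow, sq_abs]; push_cast; field_simp
  calc |(∫ y, ρ y * exp (-(x - y / s) ^ 2 / 4)) - exp (-x ^ 2 / 4)|
      = |∫ y, (ρ y * exp (-(x - y / s) ^ 2 / 4) - ρ y * (exp (-x ^ 2 / 4) - d * (y / s)))| := by
        rw [integral_sub hshift hlinear, hlinear_integral]
    _ ≤ ∫ y, 1 / (2 * s ^ 2) * |y ^ 2 * ρ y| :=
        abs_integral_le_integral_abs.trans
          (integral_mono (hshift.sub hlinear).abs (hsecond.abs.const_mul _) htaylor)
    _ = (∫ y, |y ^ 2 * ρ y|) / (2 * s ^ 2) := by rw [integral_const_mul]; ring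

theorem rescaled_heat_solution_uniform_convergence_general
    (ρ₀ : ℝ → ℝ)
    (hint : Integrable ρ₀) (hmass : ∫ x, ρ₀ x = 1)
    (hmean : ∫ y, y * ρ₀ y = 0) (hsecond : Integrable (fun y => y ^ 2 * ρ₀ y)) :
    ∃ C T : ℝ, ∀ t ≥ T, ∀ x : ℝ,
      |Real.sqrt t * (∫ y, ρ₀ y * heatKernel1 t (x * Real.sqrt t - y))
          - (4 * π) ^ (-(1 : ℝ) / 2) * Real.exp (-x ^ 2 / 4)| ≤ C / t := by
  refine ⟨(4 * π) ^ (-(1 : ℝ) / 2) * (∫ y, |y ^ 2 * ρ₀ y|) / 2, 1, fun t ht x => ?_⟩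
  have ht0 : 0 < t := one_pos.trans_le ht
  have hscale : √t * (∫ y, ρ₀ y * heatKernel1 t (x * √t - y)) =
      (4 * π) ^ (-(1 : ℝ) / 2) * ∫ y, ρ₀ y * exp (-(x - y / √t) ^ 2 / 4) := by
    rw [← integral_const_mul, ← integral_const_mul]
    congr with y
    rw [mul_left_comm, sqrt_mul_heatKernel1 ht0]
    ring
  have hnormalization : 0 < (4 * π) ^ (-(1 : ℝ) / 2) := by positivity
  rw [hscale, ← mul_sub, abs_mul, abs_of_pos hnormalization]
  calc _ ≤ (4 * π) ^ (-(1 : ℝ) / 2) * ((∫ y, |y ^ 2 * ρ₀ y|) / (2 * √t ^ 2)) := by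
        gcongr
        exact abs_integral_mul_exp_neg_sq_div_four_sub_le hint hmass hmean hsecond _ x
    _ = _ := by rw [sq_sqrt ht0.le]; ring

/-- Let `ρ₀` be a piecewise-continuous probability density with mean zero and finite
second moment, and `ρ_t = ρ₀ * G^t` the heat-equation solution with `D = 1`.  Then the
rescaled density `ρ̃_t(x) = √t·ρ_t(x√t)` converges uniformly, with rate `O(1/t)`, to the
Gaussian density `(4π)^{-1/2}·e^{-x²/4}` of mean `0` and variance `2`. -/
theorem rescaled_heat_solution_uniform_convergence
    (ρ₀ : ℝ → ℝ)
    (hpc : ∃ S : Set ℝ, S.Finite ∧ ∀ x ∉ S, ContinuousAt ρ₀ x)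
    (h0 : ∀ x, 0 ≤ ρ₀ x) (hint : Integrable ρ₀) (hmass : ∫ x, ρ₀ x = 1)
    (hmean : ∫ y, y * ρ₀ y = 0) (hsecond : Integrable (fun y => y ^ 2 * ρ₀ y)) :
    ∃ C T : ℝ, ∀ t ≥ T, ∀ x : ℝ,
      |Real.sqrt t * (∫ y, ρ₀ y * heatKernel1 t (x * Real.sqrt t - y))
          - (4 * π) ^ (-(1 : ℝ) / 2) * Real.exp (-x ^ 2 / 4)| ≤ C / t :=
  rescaled_heat_solution_uniform_convergence_general ρ₀ hint hmass hmean hsecond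
end

section
/- Under the same hypotheses, the rescaled distribution functions F̃_t(x) := ∫_{-∞}^{x√t} ρ_t converge uniformly to the normal distribution function N(x) = ∫_{-∞}^x (4π)^{-1/2}e^{-s²/4} ds, with sup_x |F̃_t(x) − N(x)| ≤ C'/√t for some constant C' and all sufficiently large t. -/
open MeasureTheory Real

/-!
Writing `N` for the distribution function of `G¹`, Fubini and the scaling
`G^t(x) = t^{-1/2} G¹(x/√t)` give `F̃_t(x) = ∫ ρ₀(y) N(x - y/√t) dy`. Since `N' = G¹` is 1-Lipschitz,
`N(x - b) = N(x) - b G¹(x) + O(b²)`. Integrated against `ρ₀`, the constant term gives `N(x)`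
(unit mass), the linear term vanishes (zero mean), and the remainder is at most
`(∫ y² ρ₀) / t ≤ (∫ y² ρ₀) / √t` for `t ≥ 1`.
-/

open ProbabilityTheory Set
open scoped NNReal Interval

lemma abs_integral_sub_mul_le_of_lipschitzWith {g : ℝ → ℝ} {K : ℝ≥0} (hg : LipschitzWith K g)
    (x b : ℝ) : |(∫ u in x..x + b, g u) - b * g x| ≤ K * b ^ 2 := by
  have hsub : (∫ u in x..x + b, g u) - b * g x = ∫ u in x..x + b, (g u - g x) := by
    rw [intervalIntegral.integral_sub (hg.continuous.intervalIntegrable _ _)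
      intervalIntegrable_const, intervalIntegral.integral_const, add_sub_cancel_left, smul_eq_mul]
  have hbound : ∀ u ∈ Ι x (x + b), ‖g u - g x‖ ≤ K * |b| := by
    intro u hu
    rw [← dist_eq_norm]
    refine (hg.dist_le_mul u x).trans (mul_le_mul_of_nonneg_left ?_ K.coe_nonneg)
    rw [dist_eq_norm, norm_eq_abs, abs_le]
    rcases mem_uIoc.mp hu with ⟨h1, h2⟩ | ⟨h1, h2⟩
    · constructor <;> linarith [abs_nonneg b, le_abs_self b]
    · constructor <;> linarith [abs_nonneg b, neg_abs_le b]
  calc |(∫ u in x..x + b, g u) - b * g x|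
      ≤ K * |b| * |x + b - x| := by
        rw [hsub, ← norm_eq_abs]; exact intervalIntegral.norm_integral_le_of_norm_le_const hbound
    _ = K * b ^ 2 := by rw [add_sub_cancel_left, mul_assoc, ← sq, sq_abs]

lemma setIntegral_Iic_comp_sub_div {E : Type*} [NormedAddCommGroup E] [NormedSpace ℝ E]
    (f : ℝ → E) (a y : ℝ) {c : ℝ} (hc : 0 < c) :
    ∫ s in Iic a, f ((s - y) / c) = c • ∫ u in Iic ((a - y) / c), f u := by
  set g := (Iic ((a - y) / c)).indicator f
  have hind : (Iic a).indicator (fun s => f ((s - y) / c)) = fun s => g ((s - y) / c) := by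
    ext s
    simp only [g, indicator_apply, mem_Iic, div_le_div_iff_of_pos_right hc, sub_le_sub_iff_right]
  calc ∫ s in Iic a, f ((s - y) / c)
      = ∫ s, g ((s - y) / c) := by rw [← integral_indicator measurableSet_Iic, hind]
    _ = ∫ s, g (s / c) := integral_sub_right_eq_self (fun s => g (s / c)) y
    _ = c • ∫ u in Iic ((a - y) / c), f u := by
      rw [Measure.integral_comp_div, abs_of_pos hc, integral_indicator measurableSet_Iic]

lemma integrable_id_mul_of_integrable_sq_mul {ρ : ℝ → ℝ} (hρ : Integrable ρ)
    (hsecond : Integrable (fun y => y ^ 2 * ρ y)) : Integrable (fun y => y * ρ y) := by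
  refine (hρ.norm.add hsecond.norm).mono' (aestronglyMeasurable_id.mul hρ.aestronglyMeasurable)
    (Filter.Eventually.of_forall fun y => ?_)
  have hy : |y| ≤ 1 + y ^ 2 := by nlinarith [sq_abs y, sq_nonneg (|y| - 1)]
  simp only [norm_mul, norm_eq_abs, Pi.add_apply]
  rw [abs_of_nonneg (sq_nonneg y)]
  nlinarith [mul_le_mul_of_nonneg_right hy (abs_nonneg (ρ y))]

lemma abs_integral_mul_sub_le_of_abs_sub_le {ρ f : ℝ → ℝ} (h0 : ∀ y, 0 ≤ ρ y) (hρ : Integrable ρ)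
    (hmass : ∫ y, ρ y = 1) (hmean : ∫ y, y * ρ y = 0) (hsecond : Integrable (fun y => y ^ 2 * ρ y))
    (hf : Integrable (fun y => ρ y * f y)) {m c K : ℝ}
    (hexp : ∀ y, |f y - m - c * y| ≤ K * y ^ 2) :
    |(∫ y, ρ y * f y) - m| ≤ K * ∫ y, y ^ 2 * ρ y := by
  have hfm : Integrable (fun y => ρ y * f y - ρ y * m) := hf.sub (hρ.mul_const m)
  have hlin : Integrable (fun y => c * (y * ρ y)) :=
    (integrable_id_mul_of_integrable_sq_mul hρ hsecond).const_mul c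
  have hexpand : (fun y => ρ y * (f y - m - c * y))
      = fun y => ρ y * f y - ρ y * m - c * (y * ρ y) := by
    ext y; ring
  have hrem : Integrable (fun y => ρ y * (f y - m - c * y)) := by
    rw [hexpand]; exact hfm.sub hlin
  have hsplit : (∫ y, ρ y * f y) - m = ∫ y, ρ y * (f y - m - c * y) := by
    rw [hexpand, integral_sub hfm hlin, integral_sub hf (hρ.mul_const m),
      integral_mul_const, integral_const_mul, hmass, hmean]
    ring
  calc |(∫ y, ρ y * f y) - m| ≤ ∫ y, |ρ y * (f y - m - c * y)| := by
        rw [hsplit]; exact abs_integral_le_integral_abs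
    _ ≤ ∫ y, K * (y ^ 2 * ρ y) := by
        refine integral_mono hrem.abs (hsecond.const_mul K) fun y => ?_
        rw [abs_mul, abs_of_nonneg (h0 y)]
        nlinarith [mul_le_mul_of_nonneg_left (hexp y) (h0 y)]
    _ = K * ∫ y, y ^ 2 * ρ y := integral_const_mul K _

lemma heatKernel1_eq_gaussianPDFReal {t : ℝ} (ht : 0 ≤ t) :
    heatKernel1 t = gaussianPDFReal 0 (2 * t).toNNReal := by
  ext x
  rw [heatKernel1, gaussianPDFReal_def, Real.coe_toNNReal _ (by positivity), ← sqrt_inv,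
    sqrt_eq_rpow, ← rpow_neg_one, ← rpow_mul (by positivity)]
  ring_nf

lemma heatKernel1_nonneg {t : ℝ} (ht : 0 ≤ t) (x : ℝ) : 0 ≤ heatKernel1 t x := by
  rw [heatKernel1_eq_gaussianPDFReal ht]
  exact gaussianPDFReal_nonneg _ _ _

lemma integrable_heatKernel1 {t : ℝ} (ht : 0 ≤ t) : Integrable (heatKernel1 t) := by
  rw [heatKernel1_eq_gaussianPDFReal ht]
  exact integrable_gaussianPDFReal _ _

lemma integral_heatKernel1 {t : ℝ} (ht : 0 < t) : ∫ x, heatKernel1 t x = 1 := by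
  rw [heatKernel1_eq_gaussianPDFReal ht.le]
  exact integral_gaussianPDFReal_eq_one _ (by simpa using ht)

lemma continuous_heatKernel1 (t : ℝ) : Continuous (heatKernel1 t) := by
  unfold heatKernel1; fun_prop

lemma heatKernel1_eq_inv_sqrt_mul {t : ℝ} (ht : 0 < t) (x : ℝ) :
    heatKernel1 t x = (√t)⁻¹ * heatKernel1 1 (x / √t) := by
  have hexp : -x ^ 2 / (4 * t) = -(x / √t) ^ 2 / (4 * 1) := by
    rw [div_pow, sq_sqrt ht.le]; ring
  rw [heatKernel1, heatKernel1, hexp, mul_one, mul_rpow (by positivity) ht.le, sqrt_eq_rpow,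
    ← rpow_neg ht.le]
  ring_nf

lemma heatKernel1_one (x : ℝ) :
    heatKernel1 1 x = (4 * π) ^ (-(1 : ℝ) / 2) * exp (-x ^ 2 / 4) := by
  simp [heatKernel1]

lemma lipschitzWith_one_heatKernel1_one : LipschitzWith 1 (heatKernel1 1) := by
  have hderiv (x : ℝ) : HasDerivAt (heatKernel1 1)
      ((4 * π) ^ (-(1 : ℝ) / 2) * (-(1 / 2) * mulExpNegMulSq (1 / 4) x)) x := by
    have hsq : HasDerivAt (fun s : ℝ => -s ^ 2 / 4) (-(2 * x) / 4) x := by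
      simpa using ((hasDerivAt_pow 2 x).neg.div_const 4)
    rw [show heatKernel1 1 = _ from funext heatKernel1_one]
    refine (hsq.exp.const_mul ((4 * π) ^ (-(1 : ℝ) / 2))).congr_deriv ?_
    rw [mulExpNegSq_apply]; ring_nf
  refine lipschitzWith_of_nnnorm_deriv_le (fun x => (hderiv x).differentiableAt) fun x => ?_
  rw [← NNReal.coe_le_coe, coe_nnnorm, (hderiv x).deriv, NNReal.coe_one, norm_mul, norm_mul]
  have hc : ‖(4 * π) ^ (-(1 : ℝ) / 2)‖ ≤ 1 := by
    rw [norm_of_nonneg (by positivity)]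
    exact rpow_le_one_of_one_le_of_nonpos (by nlinarith [pi_gt_three]) (by norm_num)
  have hm : ‖mulExpNegMulSq (1 / 4) x‖ ≤ 2 := by
    have h4 : √(4 : ℝ) = 2 := by
      rw [show (4 : ℝ) = 2 ^ 2 by norm_num, sqrt_sq (by norm_num)]
    simpa [h4] using abs_mulExpNegMulSq_le (ε := 1 / 4) (by norm_num) (x := x)
  have hhalf : ‖(-(1 / 2) : ℝ)‖ = 1 / 2 := by norm_num
  rw [hhalf]
  nlinarith [norm_nonneg ((4 * π) ^ (-(1 : ℝ) / 2)), norm_nonneg (mulExpNegMulSq (1 / 4) x)]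

noncomputable def heatKernelCDF (x : ℝ) : ℝ := ∫ s in Iic x, heatKernel1 1 s

lemma heatKernelCDF_sub (a b : ℝ) :
    heatKernelCDF b - heatKernelCDF a = ∫ u in a..b, heatKernel1 1 u :=
  intervalIntegral.integral_Iic_sub_Iic (integrable_heatKernel1 zero_le_one).integrableOn
    (integrable_heatKernel1 zero_le_one).integrableOn

lemma continuous_heatKernelCDF : Continuous heatKernelCDF := by
  have h : heatKernelCDF = fun x => heatKernelCDF 0 + ∫ u in (0 : ℝ)..x, heatKernel1 1 u := by
    ext x; rw [← heatKernelCDF_sub]; ring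
  rw [h]
  exact continuous_const.add <| intervalIntegral.continuous_primitive
    (fun _ _ => (continuous_heatKernel1 1).intervalIntegrable _ _) 0

lemma abs_heatKernelCDF_le_one (x : ℝ) : |heatKernelCDF x| ≤ 1 := by
  unfold heatKernelCDF
  rw [abs_of_nonneg (setIntegral_nonneg measurableSet_Iic fun s _ =>
    heatKernel1_nonneg zero_le_one s)]
  exact (setIntegral_le_integral (integrable_heatKernel1 zero_le_one)
    (Filter.Eventually.of_forall (heatKernel1_nonneg zero_le_one))).trans
    (integral_heatKernel1 one_pos).le

lemma abs_heatKernelCDF_add_sub_le (x b : ℝ) :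
    |heatKernelCDF (x + b) - heatKernelCDF x - b * heatKernel1 1 x| ≤ b ^ 2 := by
  simpa [heatKernelCDF_sub] using
    abs_integral_sub_mul_le_of_lipschitzWith lipschitzWith_one_heatKernel1_one x b

lemma setIntegral_Iic_heatKernel1_sub {t : ℝ} (ht : 0 < t) (a y : ℝ) :
    ∫ s in Iic a, heatKernel1 t (s - y) = heatKernelCDF ((a - y) / √t) := by
  have hst : 0 < √t := sqrt_pos.2 ht
  simp_rw [heatKernel1_eq_inv_sqrt_mul ht, integral_const_mul,
    setIntegral_Iic_comp_sub_div (heatKernel1 1) a y hst, smul_eq_mul, inv_mul_cancel_left₀ hst.ne']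
  rfl

lemma setIntegral_Iic_integral_mul_heatKernel1 {ρ : ℝ → ℝ} (hρ : Integrable ρ) {t : ℝ}
    (ht : 0 < t) (a : ℝ) :
    ∫ s in Iic a, ∫ y, ρ y * heatKernel1 t (s - y)
      = ∫ y, ρ y * heatKernelCDF ((a - y) / √t) := by
  have hcdf_meas : AEStronglyMeasurable (fun y => heatKernelCDF ((a - y) / √t)) :=
    (continuous_heatKernelCDF.comp (by fun_prop)).aestronglyMeasurable
  have hprod : Integrable (fun p : ℝ × ℝ => ρ p.2 * heatKernel1 t (p.1 - p.2))
      ((volume.restrict (Iic a)).prod volume) := by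
    refine (integrable_prod_iff' ?_).2 ⟨Filter.Eventually.of_forall fun y => ?_, ?_⟩
    · exact hρ.aestronglyMeasurable.comp_snd.mul
        ((continuous_heatKernel1 t).comp (by fun_prop)).aestronglyMeasurable
    · exact (((integrable_heatKernel1 ht.le).comp_sub_right y).const_mul (ρ y)).integrableOn
    · have hnorm (y : ℝ) : ∫ s in Iic a, ‖ρ y * heatKernel1 t (s - y)‖
          = |ρ y| * heatKernelCDF ((a - y) / √t) := by
        simp_rw [norm_mul, norm_of_nonneg (heatKernel1_nonneg ht.le _), integral_const_mul,
          setIntegral_Iic_heatKernel1_sub ht, norm_eq_abs]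
      simp_rw [hnorm]
      exact hρ.abs.mul_bdd hcdf_meas (Filter.Eventually.of_forall fun y =>
        abs_heatKernelCDF_le_one _)
  rw [integral_integral_swap hprod]
  simp_rw [integral_const_mul, setIntegral_Iic_heatKernel1_sub ht]

theorem rescaled_heat_distribution_functions_uniform_convergence_general
    (ρ₀ : ℝ → ℝ)
    (h0 : ∀ x, 0 ≤ ρ₀ x) (hint : Integrable ρ₀) (hmass : ∫ x, ρ₀ x = 1)
    (hmean : ∫ y, y * ρ₀ y = 0) (hsecond : Integrable (fun y => y ^ 2 * ρ₀ y)) :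
    ∃ C' T : ℝ, ∀ t ≥ T, ∀ x : ℝ,
      |(∫ s in Set.Iic (x * Real.sqrt t), ∫ y, ρ₀ y * heatKernel1 t (s - y))
          - ∫ s in Set.Iic x, (4 * π) ^ (-(1 : ℝ) / 2) * Real.exp (-s ^ 2 / 4)|
        ≤ C' / Real.sqrt t := by
  refine ⟨∫ y, y ^ 2 * ρ₀ y, 1, fun t ht x => ?_⟩
  have ht0 : 0 < t := by linarith
  have hst : 0 < √t := sqrt_pos.2 ht0
  have hlimit : ∫ s in Iic x, (4 * π) ^ (-(1 : ℝ) / 2) * exp (-s ^ 2 / 4) = heatKernelCDF x := by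
    simp_rw [heatKernelCDF, heatKernel1_one]
  have hexp (y : ℝ) : |heatKernelCDF ((x * √t - y) / √t) - heatKernelCDF x
      - (-heatKernel1 1 x / √t) * y| ≤ 1 / t * y ^ 2 := by
    have h := abs_heatKernelCDF_add_sub_le x (-y / √t)
    have harg : x + -y / √t = (x * √t - y) / √t := by field_simp; ring
    have hsq : (-y / √t) ^ 2 = 1 / t * y ^ 2 := by rw [div_pow, neg_sq, sq_sqrt ht0.le]; ring
    rw [harg, hsq] at h
    convert h using 3
    ring
  rw [setIntegral_Iic_integral_mul_heatKernel1 hint ht0, hlimit]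
  calc _ ≤ 1 / t * ∫ y, y ^ 2 * ρ₀ y :=
        abs_integral_mul_sub_le_of_abs_sub_le h0 hint hmass hmean hsecond
          (hint.mul_bdd (continuous_heatKernelCDF.comp (by fun_prop)).aestronglyMeasurable
            (Filter.Eventually.of_forall fun y => abs_heatKernelCDF_le_one _)) hexp
    _ ≤ (∫ y, y ^ 2 * ρ₀ y) / √t := by
        rw [one_div_mul_eq_div]
        refine div_le_div_of_nonneg_left (integral_nonneg fun y => mul_nonneg (sq_nonneg y) (h0 y))
          hst ?_
        nlinarith [sq_sqrt ht0.le]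

/-- For the heat-equation solution `ρ_t = ρ₀ * G^t` with `D = 1`, starting from a
piecewise-continuous mean-zero probability density with finite second moment, the rescaled
distribution functions `F̃_t(x) = ∫_{-∞}^{x√t} ρ_t` converge uniformly to the normal
distribution function `N(x) = ∫_{-∞}^x (4π)^{-1/2} e^{-s²/4} ds`, with rate `O(t^{-1/2})`. -/
theorem rescaled_heat_distribution_functions_uniform_convergence
    (ρ₀ : ℝ → ℝ)
    (hpc : ∃ S : Set ℝ, S.Finite ∧ ∀ x ∉ S, ContinuousAt ρ₀ x)
    (h0 : ∀ x, 0 ≤ ρ₀ x) (hint : Integrable ρ₀) (hmass : ∫ x, ρ₀ x = 1)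
    (hmean : ∫ y, y * ρ₀ y = 0) (hsecond : Integrable (fun y => y ^ 2 * ρ₀ y)) :
    ∃ C' T : ℝ, ∀ t ≥ T, ∀ x : ℝ,
      |(∫ s in Set.Iic (x * Real.sqrt t), ∫ y, ρ₀ y * heatKernel1 t (s - y))
          - ∫ s in Set.Iic x, (4 * π) ^ (-(1 : ℝ) / 2) * Real.exp (-s ^ 2 / 4)|
        ≤ C' / Real.sqrt t :=
  rescaled_heat_distribution_functions_uniform_convergence_general ρ₀ h0 hint hmass hmean hsecond
end
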